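/- arXiv:1809.07264 — 12 statements merged into one kernel-verified Lean document; each statement's English description precedes it below -/
import Mathlib

section
/- Let G be a semigroup and V a two-sided invariant linear subspace of complex-valued functions on G (i.e., if φ ∈ V then for every y ∈ G the functions x ↦ φ(xy) and x ↦ φ(yx) belong to V). Let f, g, h : G → ℂ be linearly independent modulo V (meaning λ₁f + λ₂g + λ₃h ∈ V implies λ₁ = λ₂ = λ₃ = 0). Define ψ(x,y) = f(xy) − f(x)g(y) − g(x)f(y) − h(x)h(y). If for every y ∈ G the function x ↦ ψ(x,y) belongs to V, then there exist functions φ₁, φ₂ ∈ V such that ψ(x,y) = φ₁(x)f(y) + φ₂(x)h(y) for all x, y ∈ G. -/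
/-!
Expanding `ψ(t, xy) - ψ(tx, y) - g(y) ψ(t, x)` shows that, modulo `V`, the combination
`f(y) g(·x) + h(y) h(·x)` of right translates equals a combination of `f, g, h` whose
`g`-coefficient is `f(xy) - f(x) g(y)`. As `f, h` are linearly independent, Cramer's rule at two
points with `f(z₁) h(z₂) ≠ f(z₂) h(z₁)` recovers the translates from their values at `z₁, z₂`;
comparing `g`-coefficients then puts `y ↦ f(xy) - f(x) g(y)`, hence `y ↦ ψ(x, y)`, in the span of
`f` and `h`. Cramer's rule once more writes the coefficients through `ψ(·, z₁)` and `ψ(·, z₂)`,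
which lie in `V`.
-/

section Cramer

variable {𝕜 M Z : Type*} [Field 𝕜] [AddCommGroup M] [Module 𝕜 M]

theorem LinearIndependent.exists_mul_sub_mul_ne_zero {p q : Z → 𝕜}
    (hpq : LinearIndependent 𝕜 ![p, q]) :
    ∃ z₁ z₂, p z₁ * q z₂ - p z₂ * q z₁ ≠ 0 := by
  by_contra! hdet
  obtain ⟨z₂, hz₂⟩ : ∃ z, p z ≠ 0 := by
    by_contra! hp
    exact hpq.ne_zero 0 (funext hp)
  have hdep : q z₂ • p + (-p z₂) • q = 0 := by
    funext z
    simp only [Pi.add_apply, Pi.smul_apply, smul_eq_mul, Pi.zero_apply]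
    linear_combination hdet z z₂
  exact hz₂ (neg_eq_zero.mp (LinearIndependent.pair_iff.mp hpq _ _ hdep).2)

theorem eq_smul_add_smul_cramer {p q : Z → 𝕜} {z₁ z₂ : Z}
    (hD : p z₁ * q z₂ - p z₂ * q z₁ ≠ 0) {k : Z → M} {u w : M}
    (hk : ∀ z, k z = p z • u + q z • w) (z : Z) :
    k z = p z • (p z₁ * q z₂ - p z₂ * q z₁)⁻¹ • (q z₂ • k z₁ - q z₁ • k z₂)
      + q z • (p z₁ * q z₂ - p z₂ * q z₁)⁻¹ • (p z₁ • k z₂ - p z₂ • k z₁) := by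
  have hu : q z₂ • k z₁ - q z₁ • k z₂ = (p z₁ * q z₂ - p z₂ * q z₁) • u := by
    rw [hk, hk]; module
  have hw : p z₁ • k z₂ - p z₂ • k z₁ = (p z₁ * q z₂ - p z₂ * q z₁) • w := by
    rw [hk, hk]; module
  rw [hu, hw, inv_smul_smul₀ hD, inv_smul_smul₀ hD, hk]

theorem exists_coeff_eq_of_smul_add_smul {ι : Type*} [Fintype ι] {e : ι → M}
    (he : LinearIndependent 𝕜 e) {p q : Z → 𝕜} (hpq : LinearIndependent 𝕜 ![p, q]) {u w : M}
    {c : Z → ι → 𝕜} (hc : ∀ z, p z • u + q z • w = ∑ i, c z i • e i) (i : ι) :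
    ∃ a b : 𝕜, ∀ z, c z i = a * p z + b * q z := by
  obtain ⟨z₁, z₂, hD⟩ := hpq.exists_mul_sub_mul_ne_zero
  set D := p z₁ * q z₂ - p z₂ * q z₁
  refine ⟨D⁻¹ * (q z₂ * c z₁ i - q z₁ * c z₂ i), D⁻¹ * (p z₁ * c z₂ i - p z₂ * c z₁ i),
    fun z => ?_⟩
  have hsum := eq_smul_add_smul_cramer hD (k := fun z => ∑ i, c z i • e i)
    (fun z => (hc z).symm) z
  simp only [Finset.smul_sum, smul_smul, ← Finset.sum_sub_distrib, ← sub_smul,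
    ← Finset.sum_add_distrib, ← add_smul] at hsum
  rw [Fintype.linearIndependent_iffₛ.mp he _ _ hsum i]
  ring

theorem exists_mem_forall_eq_of_linearIndependent {X : Type*} (V : Submodule 𝕜 (X → 𝕜))
    {p q : Z → 𝕜} (hpq : LinearIndependent 𝕜 ![p, q]) {F : X → Z → 𝕜}
    (hF : ∀ z, (fun x => F x z) ∈ V) (hspan : ∀ x, ∃ a b : 𝕜, ∀ z, F x z = a * p z + b * q z) :
    ∃ φ₁ φ₂ : X → 𝕜, φ₁ ∈ V ∧ φ₂ ∈ V ∧ ∀ x z, F x z = φ₁ x * p z + φ₂ x * q z := by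
  obtain ⟨z₁, z₂, hD⟩ := hpq.exists_mul_sub_mul_ne_zero
  set D := p z₁ * q z₂ - p z₂ * q z₁
  refine ⟨D⁻¹ • (q z₂ • fun x => F x z₁) - D⁻¹ • (q z₁ • fun x => F x z₂),
    D⁻¹ • (p z₁ • fun x => F x z₂) - D⁻¹ • (p z₂ • fun x => F x z₁),
    V.sub_mem (V.smul_mem _ (V.smul_mem _ (hF _))) (V.smul_mem _ (V.smul_mem _ (hF _))),
    V.sub_mem (V.smul_mem _ (V.smul_mem _ (hF _))) (V.smul_mem _ (V.smul_mem _ (hF _))),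
    fun x z => ?_⟩
  obtain ⟨a, b, hab⟩ := hspan x
  rw [eq_smul_add_smul_cramer hD (k := F x) (u := a) (w := b) (fun z => by rw [hab]; ring) z]
  simp only [Pi.sub_apply, Pi.smul_apply, smul_eq_mul]
  ring

end Cramer

section Semigroup

variable {G : Type*} [Semigroup G] {f g h : G → ℂ} {ψ : G → G → ℂ}

theorem mkQ_smul_add_smul_mul_right (V : Submodule ℂ (G → ℂ))
    (hV : ∀ φ ∈ V, ∀ y : G, (fun x => φ (x * y)) ∈ V)
    (hψ : ∀ x y, ψ x y = f (x * y) - f x * g y - g x * f y - h x * h y)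
    (hmem : ∀ y : G, (fun x => ψ x y) ∈ V) (x y : G) :
    f y • V.mkQ (fun t => g (t * x)) + h y • V.mkQ (fun t => h (t * x))
      = (g (x * y) - g x * g y) • V.mkQ f + (f (x * y) - f x * g y) • V.mkQ g
        + (h (x * y) - h x * g y) • V.mkQ h := by
  simp only [Submodule.mkQ_apply, ← Submodule.Quotient.mk_smul, ← Submodule.Quotient.mk_add,
    Submodule.Quotient.eq]
  have hdiff : f y • (fun t => g (t * x)) + h y • (fun t => h (t * x))
      - ((g (x * y) - g x * g y) • f + (f (x * y) - f x * g y) • g + (h (x * y) - h x * g y) • h)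
      = (fun t => ψ t (x * y)) - (fun t => ψ (t * x) y) - g y • (fun t => ψ t x) := by
    funext t
    simp only [Pi.sub_apply, Pi.add_apply, Pi.smul_apply, smul_eq_mul, hψ, mul_assoc]
    ring
  rw [hdiff]
  exact V.sub_mem (V.sub_mem (hmem _) (hV _ (hmem y) x)) (V.smul_mem _ (hmem x))

end Semigroup

theorem stmt_0 {G : Type*} [Semigroup G] (V : Submodule ℂ (G → ℂ))
    (hV : ∀ φ ∈ V, ∀ y : G, (fun x => φ (x * y)) ∈ V ∧ (fun x => φ (y * x)) ∈ V)
    (f g h : G → ℂ)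
    (hindep : ∀ l₁ l₂ l₃ : ℂ, (l₁ • f + l₂ • g + l₃ • h) ∈ V → l₁ = 0 ∧ l₂ = 0 ∧ l₃ = 0)
    (ψ : G → G → ℂ)
    (hψ : ∀ x y, ψ x y = f (x * y) - f x * g y - g x * f y - h x * h y)
    (hmem : ∀ y : G, (fun x => ψ x y) ∈ V) :
    ∃ φ₁ φ₂ : G → ℂ, φ₁ ∈ V ∧ φ₂ ∈ V ∧
      ∀ x y : G, ψ x y = φ₁ x * f y + φ₂ x * h y := by
  have hQ : LinearIndependent ℂ ![V.mkQ f, V.mkQ g, V.mkQ h] := by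
    refine Fintype.linearIndependent_iff.mpr fun l hl => ?_
    simp only [Fin.sum_univ_three, Matrix.cons_val, Submodule.mkQ_apply,
      ← Submodule.Quotient.mk_smul, ← Submodule.Quotient.mk_add,
      Submodule.Quotient.mk_eq_zero] at hl
    obtain ⟨h₀, h₁, h₂⟩ := hindep _ _ _ hl
    intro i
    fin_cases i <;> assumption
  have hfh : LinearIndependent ℂ ![f, h] := LinearIndependent.pair_iff.mpr fun s t hst => by
    obtain ⟨hs, -, ht⟩ := hindep s 0 t (by simp [hst])
    exact ⟨hs, ht⟩
  refine exists_mem_forall_eq_of_linearIndependent V hfh hmem fun x => ?_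
  obtain ⟨a, b, hab⟩ := exists_coeff_eq_of_smul_add_smul hQ hfh
    (c := fun y => ![g (x * y) - g x * g y, f (x * y) - f x * g y, h (x * y) - h x * g y])
    (fun y => by
      simp only [Fin.sum_univ_three]
      exact mkQ_smul_add_smul_mul_right V (fun φ hφ y => (hV φ hφ y).1) hψ hmem x y) 1
  simp only [Matrix.cons_val_one, Matrix.cons_val_zero] at hab
  exact ⟨a - g x, b - h x, fun y => by rw [hψ]; linear_combination hab y⟩
end

section
/- Let G be a semigroup and V a two-sided invariant linear subspace of complex-valued functions on G. Let f, g, h : G → ℂ be such that f and h are linearly independent modulo V and g ∈ V. If for every y ∈ G the function x ↦ f(xy) − f(x)g(y) − g(x)f(y) − h(x)h(y) belongs to V, then g is multiplicative, i.e., g(xy) = g(x)g(y) for all x, y ∈ G. -/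
/-!
Comparing the two expansions of `f (x * y * z)` given by the hypothesis shows that, modulo `V`,
every right translate `h (· * y)` is a combination `a y • f + b y • h`. Independence of `f` and `h`
modulo `V` then yields the addition formulas `g (y * z) = g y * g z + a y * h z` and
`h (y * z) = h y * g z + b y * h z`, with `a ∈ V`. Associativity of `g` gives
`a (y * z) = g y * a z + a y * b z`, so if `a ≠ 0` then `b` lies in `V` as well, and the
formula for `h` turns `h (· * y)` into `-a y • f + (g y - b y) • h` modulo `V`, forcing `a = 0`.
-/

section

variable {K G : Type*} [Field K] {V : Submodule K (G → K)} {f g h : G → K}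

theorem exists_apply_ne_zero_of_indep
    (hindep : ∀ l₁ l₂ : K, l₁ • f + l₂ • h ∈ V → l₁ = 0 ∧ l₂ = 0) : ∃ z, h z ≠ 0 := by
  by_contra! h0
  have hh : h = 0 := funext h0
  exact one_ne_zero (hindep 0 1 (by simp [hh])).2

variable [Semigroup G]

theorem associativity_defect_mem (hVr : ∀ φ ∈ V, ∀ y : G, (fun x => φ (x * y)) ∈ V)
    (hg : g ∈ V) (hmem : ∀ y : G, (fun x => f (x * y) - f x * g y - g x * f y - h x * h y) ∈ V)
    (y z : G) :
    (fun x => f x * (g (y * z) - g y * g z) + h x * (h (y * z) - h y * g z) - h (x * y) * h z)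
      ∈ V := by
  -- `f (x * y * z)` expanded once at `y * z` and once at `z` then `y`
  have hcomb := V.add_mem (V.sub_mem (V.add_mem (V.sub_mem (hVr _ (hmem z) y) (hmem (y * z)))
      (V.smul_mem (g z) (hmem y))) (V.smul_mem (f (y * z) - f y * g z) hg))
    (V.smul_mem (f z) (hVr g hg y))
  convert hcomb using 1
  funext x
  simp only [Pi.add_apply, Pi.sub_apply, Pi.smul_apply, smul_eq_mul, mul_assoc]
  ring

theorem exists_addition_formulas (hVr : ∀ φ ∈ V, ∀ y : G, (fun x => φ (x * y)) ∈ V)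
    (hindep : ∀ l₁ l₂ : K, l₁ • f + l₂ • h ∈ V → l₁ = 0 ∧ l₂ = 0) (hg : g ∈ V)
    (hmem : ∀ y : G, (fun x => f (x * y) - f x * g y - g x * f y - h x * h y) ∈ V) :
    ∃ a b : G → K, a ∈ V ∧ (∀ y z, g (y * z) = g y * g z + a y * h z) ∧
      (∀ y z, h (y * z) = h y * g z + b y * h z) ∧
      ∀ y, (fun x => h (x * y) - a y * f x - b y * h x) ∈ V := by
  obtain ⟨z₀, hz₀⟩ := exists_apply_ne_zero_of_indep hindep
  set a : G → K := fun y => (g (y * z₀) - g y * g z₀) / h z₀ with ha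
  set b : G → K := fun y => (h (y * z₀) - h y * g z₀) / h z₀ with hb
  have htrans : ∀ y, (fun x => h (x * y) - a y * f x - b y * h x) ∈ V := by
    intro y
    convert V.smul_mem (-(h z₀)⁻¹) (associativity_defect_mem hVr hg hmem y z₀) using 1
    funext x
    simp only [Pi.smul_apply, smul_eq_mul, ha, hb]
    field_simp
    ring
  have hformulas : ∀ y z,
      g (y * z) = g y * g z + a y * h z ∧ h (y * z) = h y * g z + b y * h z := by
    intro y z
    obtain ⟨hgyz, hhyz⟩ := hindep
      (g (y * z) - g y * g z - a y * h z) (h (y * z) - h y * g z - b y * h z) (by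
        convert V.add_mem (associativity_defect_mem hVr hg hmem y z) (V.smul_mem (h z) (htrans y))
          using 1
        funext x
        simp only [Pi.add_apply, Pi.smul_apply, smul_eq_mul]
        ring)
    exact ⟨by linear_combination hgyz, by linear_combination hhyz⟩
  refine ⟨a, b, ?_, fun y z => (hformulas y z).1, fun y z => (hformulas y z).2, htrans⟩
  convert V.add_mem (V.smul_mem (h z₀)⁻¹ (hVr g hg z₀)) (V.smul_mem (-(g z₀ / h z₀)) hg) using 1
  funext y
  simp only [Pi.add_apply, Pi.smul_apply, smul_eq_mul, ha]
  field_simp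
  ring

theorem apply_mul_eq_of_addition_formulas {a b : G → K}
    (hga : ∀ y z, g (y * z) = g y * g z + a y * h z)
    (hhb : ∀ y z, h (y * z) = h y * g z + b y * h z) {w : G} (hw : h w ≠ 0) (y z : G) :
    a (y * z) = g y * a z + a y * b z := by
  -- expand `g (y * z * w)` in both bracketings
  refine mul_right_cancel₀ hw ?_
  have hassoc := hga y (z * w)
  rw [← mul_assoc] at hassoc
  linear_combination -hga (y * z) w + hassoc + g y * hga z w + a y * hhb z w - g w * hga y z

theorem eq_zero_of_addition_formulas (hVl : ∀ φ ∈ V, ∀ y : G, (fun x => φ (y * x)) ∈ V)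
    (hindep : ∀ l₁ l₂ : K, l₁ • f + l₂ • h ∈ V → l₁ = 0 ∧ l₂ = 0) {a b : G → K} (ha : a ∈ V)
    (hga : ∀ y z, g (y * z) = g y * g z + a y * h z)
    (hhb : ∀ y z, h (y * z) = h y * g z + b y * h z)
    (htrans : ∀ y, (fun x => h (x * y) - a y * f x - b y * h x) ∈ V) : a = 0 := by
  obtain ⟨w, hw⟩ := exists_apply_ne_zero_of_indep hindep
  by_contra hne
  obtain ⟨y₀, hy₀⟩ : ∃ y₀, a y₀ ≠ 0 := Function.ne_iff.mp hne
  have hb : b ∈ V := by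
    convert V.add_mem (V.smul_mem (a y₀)⁻¹ (hVl a ha y₀)) (V.smul_mem (-(g y₀ / a y₀)) ha)
      using 1
    funext z
    simp only [Pi.add_apply, Pi.smul_apply, smul_eq_mul,
      apply_mul_eq_of_addition_formulas hga hhb hw y₀ z]
    field_simp
    ring
  have hcoeffs := hindep (-a y₀) (g y₀ - b y₀) (by
    convert V.sub_mem (htrans y₀) (V.smul_mem (h y₀) hb) using 1
    funext x
    simp only [Pi.add_apply, Pi.sub_apply, Pi.smul_apply, smul_eq_mul, hhb x y₀]
    ring)
  exact hy₀ (neg_eq_zero.mp hcoeffs.1)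

end

theorem stmt_1 {G : Type*} [Semigroup G] (V : Submodule ℂ (G → ℂ))
    (hV : ∀ φ ∈ V, ∀ y : G, (fun x => φ (x * y)) ∈ V ∧ (fun x => φ (y * x)) ∈ V)
    (f g h : G → ℂ)
    (hindep : ∀ l₁ l₂ : ℂ, (l₁ • f + l₂ • h) ∈ V → l₁ = 0 ∧ l₂ = 0)
    (hg : g ∈ V)
    (hmem : ∀ y : G, (fun x => f (x * y) - f x * g y - g x * f y - h x * h y) ∈ V) :
    ∀ x y : G, g (x * y) = g x * g y := by
  obtain ⟨a, b, ha, hga, hhb, htrans⟩ :=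
    exists_addition_formulas (fun φ hφ y => (hV φ hφ y).1) hindep hg hmem
  have ha0 : a = 0 :=
    eq_zero_of_addition_formulas (fun φ hφ y => (hV φ hφ y).2) hindep ha hga hhb htrans
  intro x y
  simpa [ha0] using hga x y
end

section
/- Let G be a semigroup and V a two-sided invariant linear subspace of complex-valued functions on G. Let f, g, h : G → ℂ be such that f ≠ 0, f and h are linearly dependent modulo V with h ∉ V, and suppose that for every y ∈ G the function x ↦ f(xy) − f(x)g(y) − g(x)f(y) − h(x)h(y) belongs to V. Then f ∉ V. -/
/-! If `f ∈ V`, translating the defining relation and subtracting multiples of `f` shows that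
`f(y) • g + h(y) • h ∈ V` for every `y`. Either two of these relations have a nonzero determinant
`f(y₂) h(y₁) - f(y₁) h(y₂)`, and eliminating `g` puts `h` in `V`; or all such determinants vanish,
so `h` is a scalar multiple of `f ≠ 0` and again `h ∈ V`. -/

section LinearAlgebra

variable {ι K M : Type*} [Field K] [AddCommGroup M] [Module K M]

theorem Submodule.mem_of_forall_smul_add_smul_mem (V : Submodule K M) {a b : ι → K} {u w : M}
    (hV : ∀ i, a i • u + b i • w ∈ V) {i j : ι} (hij : a j * b i - a i * b j ≠ 0) : w ∈ V := by
  have hw : (a j * b i - a i * b j) • w ∈ V := by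
    convert V.sub_mem (V.smul_mem (a j) (hV i)) (V.smul_mem (a i) (hV j)) using 1
    simp only [smul_add, smul_smul, sub_smul]
    rw [mul_comm (a j) (a i)]
    abel
  simpa [smul_smul, inv_mul_cancel₀ hij] using V.smul_mem (a j * b i - a i * b j)⁻¹ hw

theorem eq_smul_of_forall_mul_eq_mul {a b : ι → K} {i₀ : ι} (hi₀ : a i₀ ≠ 0)
    (hab : ∀ i j, a i * b j = a j * b i) : b = (b i₀ / a i₀) • a := by
  funext i
  rw [Pi.smul_apply, smul_eq_mul, div_mul_eq_mul_div, eq_div_iff hi₀]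
  linear_combination -hab i i₀

end LinearAlgebra

theorem smul_add_smul_mem_of_sub_mem {G : Type*} [Semigroup G] {V : Submodule ℂ (G → ℂ)}
    (hV : ∀ φ ∈ V, ∀ y : G, (fun x => φ (x * y)) ∈ V) {f g h : G → ℂ}
    (hmem : ∀ y : G, (fun x => f (x * y) - f x * g y - g x * f y - h x * h y) ∈ V)
    (hfV : f ∈ V) (y : G) : f y • g + h y • h ∈ V := by
  convert V.sub_mem (V.sub_mem (hV f hfV y) (V.smul_mem (g y) hfV)) (hmem y) using 1
  funext x
  simp only [Pi.add_apply, Pi.sub_apply, Pi.smul_apply, smul_eq_mul]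
  ring

theorem stmt_3_general {G : Type*} [Semigroup G] (V : Submodule ℂ (G → ℂ))
    (hV : ∀ φ ∈ V, ∀ y : G, (fun x => φ (x * y)) ∈ V ∧ (fun x => φ (y * x)) ∈ V)
    (f g h : G → ℂ) (hf : f ≠ 0)
    (hhV : h ∉ V)
    (hmem : ∀ y : G, (fun x => f (x * y) - f x * g y - g x * f y - h x * h y) ∈ V) :
    f ∉ V := by
  intro hfV
  apply hhV
  have hrel := smul_add_smul_mem_of_sub_mem (fun φ hφ y => (hV φ hφ y).1) hmem hfV
  by_cases hdet : ∃ y₁ y₂, f y₂ * h y₁ - f y₁ * h y₂ ≠ 0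
  · obtain ⟨y₁, y₂, hne⟩ := hdet
    exact V.mem_of_forall_smul_add_smul_mem hrel hne
  · push Not at hdet
    obtain ⟨y₀, hy₀⟩ := Function.ne_iff.mp hf
    rw [eq_smul_of_forall_mul_eq_mul hy₀ fun y₁ y₂ => (sub_eq_zero.mp (hdet y₂ y₁))]
    exact V.smul_mem _ hfV

theorem stmt_3 {G : Type*} [Semigroup G] (V : Submodule ℂ (G → ℂ))
    (hV : ∀ φ ∈ V, ∀ y : G, (fun x => φ (x * y)) ∈ V ∧ (fun x => φ (y * x)) ∈ V)
    (f g h : G → ℂ) (hf : f ≠ 0)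
    (hdep : ∃ l₁ l₂ : ℂ, (l₁ ≠ 0 ∨ l₂ ≠ 0) ∧ (l₁ • f + l₂ • h) ∈ V)
    (hhV : h ∉ V)
    (hmem : ∀ y : G, (fun x => f (x * y) - f x * g y - g x * f y - h x * h y) ∈ V) :
    f ∉ V :=
  stmt_3_general V hV f g h hf hhV hmem
end

section
/- Let G be a group with identity, m : G → ℂ a nonzero multiplicative function, and H : G → ℂ an unbounded function satisfying H(xy) = H(x)m(y) + H(y)m(x) for all x, y ∈ G. Then there exists a nonzero additive function a : G → ℂ (i.e., a(xy) = a(x) + a(y)) such that H = a·m. -/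
/-!
Since `m` is multiplicative on a group and not identically zero, it never vanishes, so
`a := H / m` is defined everywhere. Dividing the functional equation by `m (x * y) = m x * m y`
shows that `a` is additive, and `a ≠ 0` because otherwise `H = a * m = 0` would be bounded.
-/

theorem ne_zero_of_map_mul_of_ne_zero {G M₀ : Type*} [Group G] [MulZeroClass M₀]
    {m : G → M₀} (hm : ∀ x y, m (x * y) = m x * m y) (hm0 : m ≠ 0) (x : G) : m x ≠ 0 := by
  obtain ⟨x₀, hx₀⟩ := Function.ne_iff.mp hm0
  intro hx
  apply hx₀
  rw [← mul_inv_cancel_left x x₀, hm, hx, zero_mul, Pi.zero_apply]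

theorem div_map_mul_of_sine_addition {G K : Type*} [Mul G] [Field K]
    {m H : G → K} (hm : ∀ x y, m (x * y) = m x * m y) (hmx : ∀ x, m x ≠ 0)
    (hH : ∀ x y, H (x * y) = H x * m y + H y * m x) (x y : G) :
    H (x * y) / m (x * y) = H x / m x + H y / m y := by
  have := hmx x
  have := hmx y
  rw [hH, hm]
  field_simp

theorem stmt_7 {G : Type*} [Group G]
    (m : G → ℂ) (hm : ∀ x y, m (x * y) = m x * m y) (hm0 : m ≠ 0)
    (H : G → ℂ) (hHunb : ¬ ∃ C : ℝ, ∀ x : G, ‖H x‖ ≤ C)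
    (hH : ∀ x y : G, H (x * y) = H x * m y + H y * m x) :
    ∃ a : G → ℂ, a ≠ 0 ∧ (∀ x y : G, a (x * y) = a x + a y) ∧
      ∀ x : G, H x = a x * m x := by
  have hmx := ne_zero_of_map_mul_of_ne_zero hm hm0
  have hHm (x : G) : H x = H x / m x * m x := (div_mul_cancel₀ _ (hmx x)).symm
  refine ⟨fun x => H x / m x, ?_, div_map_mul_of_sine_addition hm hmx hH, hHm⟩
  intro ha
  refine hHunb ⟨0, fun x => ?_⟩
  rw [hHm x, congrFun ha x, Pi.zero_apply, zero_mul, norm_zero]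
end

section
/- Let G be a group, m : G → ℂ a nonzero bounded multiplicative function, a : G → ℂ an additive function, b : G → ℂ a bounded function, and λ ∈ ℂ a constant. Define f = a·m + φ, g = (1 − (λ²/2)a)·m − λb − (λ²/2)φ, and h = λ·a·m + b + λφ, where φ : G → ℂ is bounded. Then the function (x,y) ↦ f(xy) − f(x)g(y) − g(x)f(y) − h(x)h(y) is bounded on G × G. -/
/-!
Substituting the definitions, every term involving the additive function `a` cancels because
`a (x * y) = a x + a y` and `m (x * y) = m x * m y`; what is left,
`φ (x * y) - φ x * m y - φ y * m x - b x * b y`, only involves bounded functions.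
-/

lemma defect_eq_of_additive {G K : Type*} [Mul G] [Field K] [CharZero K]
    {m a b φ f g h : G → K} (hm : ∀ x y, m (x * y) = m x * m y)
    (ha : ∀ x y, a (x * y) = a x + a y) (lam : K)
    (hf : ∀ x, f x = a x * m x + φ x)
    (hg : ∀ x, g x = (1 - lam ^ 2 / 2 * a x) * m x - lam * b x - lam ^ 2 / 2 * φ x)
    (hh : ∀ x, h x = lam * a x * m x + b x + lam * φ x) (x y : G) :
    f (x * y) - f x * g y - g x * f y - h x * h y =
      φ (x * y) - φ x * m y - φ y * m x - b x * b y := by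
  rw [hf, hf, hf, hg, hg, hh, hh, ha, hm]
  ring

lemma exists_norm_defect_le {G K : Type*} [Mul G] [SeminormedRing K] {m b φ : G → K}
    (hmb : ∃ C : ℝ, ∀ x, ‖m x‖ ≤ C) (hb : ∃ C : ℝ, ∀ x, ‖b x‖ ≤ C)
    (hφ : ∃ C : ℝ, ∀ x, ‖φ x‖ ≤ C) :
    ∃ C : ℝ, ∀ x y, ‖φ (x * y) - φ x * m y - φ y * m x - b x * b y‖ ≤ C := by
  obtain ⟨Cm, hCm⟩ := hmb
  obtain ⟨Cb, hCb⟩ := hb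
  obtain ⟨Cφ, hCφ⟩ := hφ
  refine ⟨Cφ + 2 * (Cφ * Cm) + Cb * Cb, fun x y => ?_⟩
  have hCφ₀ : 0 ≤ Cφ := (norm_nonneg _).trans (hCφ x)
  have hCb₀ : 0 ≤ Cb := (norm_nonneg _).trans (hCb x)
  have hmul {u v : G → K} {Cu Cv : ℝ} (hCu₀ : 0 ≤ Cu) (hu : ∀ x, ‖u x‖ ≤ Cu)
      (hv : ∀ x, ‖v x‖ ≤ Cv) (x y : G) : ‖u x * v y‖ ≤ Cu * Cv :=
    (norm_mul_le _ _).trans (mul_le_mul (hu x) (hv y) (norm_nonneg _) hCu₀)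
  have htri : ‖φ (x * y) - φ x * m y - φ y * m x - b x * b y‖
      ≤ ‖φ (x * y)‖ + ‖φ x * m y‖ + ‖φ y * m x‖ + ‖b x * b y‖ := by
    grw [norm_sub_le, norm_sub_le, norm_sub_le]
  linarith [hCφ (x * y), hmul hCφ₀ hCφ hCm x y, hmul hCφ₀ hCφ hCm y x, hmul hCb₀ hCb hCb x y]

theorem stmt_8_general {G : Type*} [Group G]
    (m : G → ℂ) (hm : ∀ x y, m (x * y) = m x * m y)
    (hmb : ∃ C : ℝ, ∀ x : G, ‖m x‖ ≤ C)
    (a : G → ℂ) (ha : ∀ x y, a (x * y) = a x + a y)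
    (b : G → ℂ) (hb : ∃ C : ℝ, ∀ x : G, ‖b x‖ ≤ C)
    (φ : G → ℂ) (hφ : ∃ C : ℝ, ∀ x : G, ‖φ x‖ ≤ C)
    (lam : ℂ) (f g h : G → ℂ)
    (hf : ∀ x, f x = a x * m x + φ x)
    (hg : ∀ x, g x = (1 - lam ^ 2 / 2 * a x) * m x - lam * b x - lam ^ 2 / 2 * φ x)
    (hh : ∀ x, h x = lam * a x * m x + b x + lam * φ x) :
    ∃ C : ℝ, ∀ x y : G,
      ‖f (x * y) - f x * g y - g x * f y - h x * h y‖ ≤ C := by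
  simpa only [defect_eq_of_additive hm ha lam hf hg hh] using exists_norm_defect_le hmb hb hφ

theorem stmt_8 {G : Type*} [Group G]
    (m : G → ℂ) (hm : ∀ x y, m (x * y) = m x * m y) (hm0 : m ≠ 0)
    (hmb : ∃ C : ℝ, ∀ x : G, ‖m x‖ ≤ C)
    (a : G → ℂ) (ha : ∀ x y, a (x * y) = a x + a y)
    (b : G → ℂ) (hb : ∃ C : ℝ, ∀ x : G, ‖b x‖ ≤ C)
    (φ : G → ℂ) (hφ : ∃ C : ℝ, ∀ x : G, ‖φ x‖ ≤ C)
    (lam : ℂ) (f g h : G → ℂ)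
    (hf : ∀ x, f x = a x * m x + φ x)
    (hg : ∀ x, g x = (1 - lam ^ 2 / 2 * a x) * m x - lam * b x - lam ^ 2 / 2 * φ x)
    (hh : ∀ x, h x = lam * a x * m x + b x + lam * φ x) :
    ∃ C : ℝ, ∀ x y : G,
      ‖f (x * y) - f x * g y - g x * f y - h x * h y‖ ≤ C :=
  stmt_8_general m hm hmb a ha b hb φ hφ lam f g h hf hg hh
end

section
/- Let G be a group, α, λ ∈ ℂ constants, m : G → ℂ a multiplicative function, and b, φ : G → ℂ bounded functions. Define f = α·m − α·b, g = ((1 − αλ²)/2)·m + ((1 + αλ²)/2)·b − λφ, and h = αλ·m − αλ·b + φ. Then the function (x,y) ↦ f(xy) − f(x)g(y) − g(x)f(y) − h(x)h(y) is bounded on G × G. -/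
/-!
Substituting the three forms, every term containing the multiplicative function `m` cancels
(this is where `m (x * y) = m x * m y` enters), and the defect collapses to
`α * (b x * b y - b (x * y)) - φ x * φ y`, which involves only the bounded functions `b` and `φ`.
-/

section SineDefect

variable {M : Type*} [Mul M]

def sineDefect (f g h : M → ℂ) (x y : M) : ℂ :=
  f (x * y) - f x * g y - g x * f y - h x * h y

theorem sineDefect_eq {α lam : ℂ} {m b φ f g h : M → ℂ}
    (hm : ∀ x y, m (x * y) = m x * m y)
    (hf : ∀ x, f x = α * m x - α * b x)
    (hg : ∀ x, g x = (1 - α * lam ^ 2) / 2 * m x + (1 + α * lam ^ 2) / 2 * b x - lam * φ x)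
    (hh : ∀ x, h x = α * lam * m x - α * lam * b x + φ x) (x y : M) :
    sineDefect f g h x y = α * (b x * b y - b (x * y)) - φ x * φ y := by
  simp only [sineDefect, hf, hg, hh, hm]
  ring

theorem norm_mul_sub_sub_mul_le {α : ℂ} {b φ : M → ℂ} {Cb Cφ : ℝ}
    (hb : ∀ x, ‖b x‖ ≤ Cb) (hφ : ∀ x, ‖φ x‖ ≤ Cφ) (x y : M) :
    ‖α * (b x * b y - b (x * y)) - φ x * φ y‖ ≤ ‖α‖ * (Cb * Cb + Cb) + Cφ * Cφ := by
  have hCb : 0 ≤ Cb := (norm_nonneg _).trans (hb x)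
  have hCφ : 0 ≤ Cφ := (norm_nonneg _).trans (hφ x)
  calc ‖α * (b x * b y - b (x * y)) - φ x * φ y‖
      ≤ ‖α‖ * (‖b x‖ * ‖b y‖ + ‖b (x * y)‖) + ‖φ x‖ * ‖φ y‖ := by
        refine (norm_sub_le _ _).trans ?_
        rw [norm_mul, norm_mul]
        gcongr
        exact (norm_sub_le _ _).trans_eq (by rw [norm_mul])
    _ ≤ ‖α‖ * (Cb * Cb + Cb) + Cφ * Cφ := by
        gcongr
        exacts [hb x, hb y, hb _, hφ x, hφ y]

end SineDefect

theorem stmt_9 {G : Type*} [Group G] (α lam : ℂ)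
    (m : G → ℂ) (hm : ∀ x y, m (x * y) = m x * m y)
    (b : G → ℂ) (hb : ∃ C : ℝ, ∀ x : G, ‖b x‖ ≤ C)
    (φ : G → ℂ) (hφ : ∃ C : ℝ, ∀ x : G, ‖φ x‖ ≤ C)
    (f g h : G → ℂ)
    (hf : ∀ x, f x = α * m x - α * b x)
    (hg : ∀ x, g x = (1 - α * lam ^ 2) / 2 * m x + (1 + α * lam ^ 2) / 2 * b x - lam * φ x)
    (hh : ∀ x, h x = α * lam * m x - α * lam * b x + φ x) :
    ∃ C : ℝ, ∀ x y : G,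
      ‖f (x * y) - f x * g y - g x * f y - h x * h y‖ ≤ C := by
  obtain ⟨Cb, hCb⟩ := hb
  obtain ⟨Cφ, hCφ⟩ := hφ
  refine ⟨‖α‖ * (Cb * Cb + Cb) + Cφ * Cφ, fun x y => ?_⟩
  change ‖sineDefect f g h x y‖ ≤ _
  rw [sineDefect_eq hm hf hg hh]
  exact norm_mul_sub_sub_mul_le hCb hCφ x y
end

section
/- Let G be a group, λ ∈ ℂ a constant, b : G → ℂ a bounded function, and f₀, g₀ : G → ℂ functions satisfying the sine functional equation f₀(xy) = f₀(x)g₀(y) + g₀(x)f₀(y) for all x, y ∈ G. Define f = f₀, g = g₀ − (λ²/2)f₀ − λb, and h = λf₀ + b. Then f(xy) − f(x)g(y) − g(x)f(y) − h(x)h(y) = −b(x)b(y) for all x, y ∈ G; in particular, the function (x,y) ↦ f(xy) − f(x)g(y) − g(x)f(y) − h(x)h(y) is bounded on G × G. -/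
theorem stmt_10 {G : Type*} [Group G] (lam : ℂ)
    (b : G → ℂ) (hb : ∃ C : ℝ, ∀ x : G, ‖b x‖ ≤ C)
    (f₀ g₀ : G → ℂ)
    (hsine : ∀ x y : G, f₀ (x * y) = f₀ x * g₀ y + g₀ x * f₀ y)
    (f g h : G → ℂ)
    (hf : ∀ x, f x = f₀ x)
    (hg : ∀ x, g x = g₀ x - lam ^ 2 / 2 * f₀ x - lam * b x)
    (hh : ∀ x, h x = lam * f₀ x + b x) :
    (∀ x y : G, f (x * y) - f x * g y - g x * f y - h x * h y = -(b x * b y)) ∧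
    ∃ C : ℝ, ∀ x y : G,
      ‖f (x * y) - f x * g y - g x * f y - h x * h y‖ ≤ C := by
  have key : ∀ x y : G, f (x * y) - f x * g y - g x * f y - h x * h y = -(b x * b y) := by
    intro x y
    rw [hf, hf, hf, hg, hg, hh, hh, hsine]
    ring
  refine ⟨key, ?_⟩
  obtain ⟨C, hC⟩ := hb
  have hC0 : 0 ≤ C := le_trans (norm_nonneg _) (hC 1)
  refine ⟨C * C, fun x y => ?_⟩
  rw [key x y, norm_neg, norm_mul]
  exact mul_le_mul (hC x) (hC y) (norm_nonneg _) hC0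
end

section
/- Let G be a group, ρ ∈ ℂ, λ ∈ ℂ \ {0} constants, b : G → ℂ a bounded function, and f₀, g₀ : G → ℂ functions satisfying the cosine functional equation f₀(xy) = f₀(x)f₀(y) − g₀(x)g₀(y) for all x, y ∈ G. Define f = −λ²f₀ + λ²b, g = ((1+ρ²)/2)f₀ + ρg₀ + ((1−ρ²)/2)b, and h = λρf₀ + λg₀ − λρb. Then the function (x,y) ↦ f(xy) − f(x)g(y) − g(x)f(y) − h(x)h(y) is bounded on G × G. -/
/-! The cosine equation makes every `f₀`, `g₀` term cancel, so the expression equals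
`λ² (b(xy) − b(x) b(y))`, which is bounded because `b` is. -/

theorem exists_norm_map_mul_sub_mul_le {M R : Type*} [Mul M] [SeminormedRing R] {b : M → R}
    (hb : ∃ C : ℝ, ∀ x, ‖b x‖ ≤ C) :
    ∃ C : ℝ, ∀ x y, ‖b (x * y) - b x * b y‖ ≤ C := by
  obtain ⟨C, hC⟩ := hb
  have hC₀ : ∀ x, ‖b x‖ ≤ max C 0 := fun x => (hC x).trans (le_max_left _ _)
  refine ⟨max C 0 + max C 0 * max C 0, fun x y => ?_⟩
  calc ‖b (x * y) - b x * b y‖ ≤ ‖b (x * y)‖ + ‖b x‖ * ‖b y‖ :=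
        (norm_sub_le _ _).trans (add_le_add_right (norm_mul_le _ _) _)
    _ ≤ max C 0 + max C 0 * max C 0 :=
        add_le_add (hC₀ _) (mul_le_mul (hC₀ x) (hC₀ y) (norm_nonneg _) (le_max_right _ _))

theorem cosine_combination_eq {M K : Type*} [Mul M] [Field K] [NeZero (2 : K)]
    (ρ lam : K) (b f₀ g₀ : M → K)
    (hcos : ∀ x y, f₀ (x * y) = f₀ x * f₀ y - g₀ x * g₀ y) (x y : M) :
    let f := fun x => -lam ^ 2 * f₀ x + lam ^ 2 * b x
    let g := fun x => (1 + ρ ^ 2) / 2 * f₀ x + ρ * g₀ x + (1 - ρ ^ 2) / 2 * b x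
    let h := fun x => lam * ρ * f₀ x + lam * g₀ x - lam * ρ * b x
    f (x * y) - f x * g y - g x * f y - h x * h y = lam ^ 2 * (b (x * y) - b x * b y) := by
  simp only [hcos]
  field_simp
  ring

theorem stmt_11_general {G : Type*} [Group G] (ρ : ℂ) (lam : ℂ)
    (b : G → ℂ) (hb : ∃ C : ℝ, ∀ x : G, ‖b x‖ ≤ C)
    (f₀ g₀ : G → ℂ)
    (hcos : ∀ x y : G, f₀ (x * y) = f₀ x * f₀ y - g₀ x * g₀ y)
    (f g h : G → ℂ)
    (hf : ∀ x, f x = -lam ^ 2 * f₀ x + lam ^ 2 * b x)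
    (hg : ∀ x, g x = (1 + ρ ^ 2) / 2 * f₀ x + ρ * g₀ x + (1 - ρ ^ 2) / 2 * b x)
    (hh : ∀ x, h x = lam * ρ * f₀ x + lam * g₀ x - lam * ρ * b x) :
    ∃ C : ℝ, ∀ x y : G,
      ‖f (x * y) - f x * g y - g x * f y - h x * h y‖ ≤ C := by
  obtain ⟨C, hC⟩ := exists_norm_map_mul_sub_mul_le hb
  refine ⟨‖lam‖ ^ 2 * C, fun x y => ?_⟩
  have hf' : f = _ := funext hf
  have hg' : g = _ := funext hg
  have hh' : h = _ := funext hh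
  subst hf' hg' hh'
  rw [cosine_combination_eq ρ lam b f₀ g₀ hcos x y, norm_mul, norm_pow]
  exact mul_le_mul_of_nonneg_left (hC x y) (by positivity)

theorem stmt_11 {G : Type*} [Group G] (ρ : ℂ) (lam : ℂ) (hlam : lam ≠ 0)
    (b : G → ℂ) (hb : ∃ C : ℝ, ∀ x : G, ‖b x‖ ≤ C)
    (f₀ g₀ : G → ℂ)
    (hcos : ∀ x y : G, f₀ (x * y) = f₀ x * f₀ y - g₀ x * g₀ y)
    (f g h : G → ℂ)
    (hf : ∀ x, f x = -lam ^ 2 * f₀ x + lam ^ 2 * b x)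
    (hg : ∀ x, g x = (1 + ρ ^ 2) / 2 * f₀ x + ρ * g₀ x + (1 - ρ ^ 2) / 2 * b x)
    (hh : ∀ x, h x = lam * ρ * f₀ x + lam * g₀ x - lam * ρ * b x) :
    ∃ C : ℝ, ∀ x y : G,
      ‖f (x * y) - f x * g y - g x * f y - h x * h y‖ ≤ C :=
  stmt_11_general ρ lam b hb f₀ g₀ hcos f g h hf hg hh
end

section
/- Let G be a group, β ∈ ℂ a constant, m : G → ℂ a nonzero bounded multiplicative function, a, a₁ : G → ℂ additive functions with a ≠ 0, and b : G → ℂ a bounded function. Define f = (1/2)a²·m + (1/2)a₁·m + b, g = −(1/4)β²a²·m + βa·m − (1/4)β²a₁·m + m − (1/2)β²b, and h = −(1/2)βa²·m + a·m − (1/2)βa₁·m − βb. Then the function (x,y) ↦ f(xy) − f(x)g(y) − g(x)f(y) − h(x)h(y) is bounded on G × G. -/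
/-! The quadratic parts cancel: since `m` is multiplicative and `a`, `a₁` are additive, the
defect `f (x * y) - f x * g y - g x * f y - h x * h y` collapses to
`b (x * y) - b x * m y - m x * b y`, which is bounded because `b` and `m` are. -/

theorem sub_mul_sub_mul_sub_mul_eq_of_additive {G : Type*} [Mul G] (β : ℂ)
    {m a a₁ b f g h : G → ℂ} (hm : ∀ x y, m (x * y) = m x * m y)
    (ha : ∀ x y, a (x * y) = a x + a y) (ha₁ : ∀ x y, a₁ (x * y) = a₁ x + a₁ y)
    (hf : ∀ x, f x = (1 / 2) * a x ^ 2 * m x + (1 / 2) * a₁ x * m x + b x)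
    (hg : ∀ x, g x = -(1 / 4) * β ^ 2 * a x ^ 2 * m x + β * a x * m x
      - (1 / 4) * β ^ 2 * a₁ x * m x + m x - (1 / 2) * β ^ 2 * b x)
    (hh : ∀ x, h x = -(1 / 2) * β * a x ^ 2 * m x + a x * m x
      - (1 / 2) * β * a₁ x * m x - β * b x) (x y : G) :
    f (x * y) - f x * g y - g x * f y - h x * h y = b (x * y) - b x * m y - m x * b y := by
  rw [hf, hf, hf, hg, hg, hh, hh, hm, ha, ha₁]
  ring

theorem exists_norm_sub_mul_sub_mul_le {G R : Type*} [Mul G] [SeminormedRing R] {m b : G → R}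
    (hm : ∃ C : ℝ, ∀ x, ‖m x‖ ≤ C) (hb : ∃ C : ℝ, ∀ x, ‖b x‖ ≤ C) :
    ∃ C : ℝ, ∀ x y, ‖b (x * y) - b x * m y - m x * b y‖ ≤ C := by
  obtain ⟨Cm, hCm⟩ := hm
  obtain ⟨Cb, hCb⟩ := hb
  refine ⟨Cb + Cb * Cm + Cm * Cb, fun x y => ?_⟩
  calc ‖b (x * y) - b x * m y - m x * b y‖
      ≤ ‖b (x * y)‖ + ‖b x‖ * ‖m y‖ + ‖m x‖ * ‖b y‖ := by
        refine (norm_sub_le _ _).trans (add_le_add ((norm_sub_le _ _).trans ?_) ?_)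
        · exact add_le_add_right (norm_mul_le _ _) _
        · exact norm_mul_le _ _
    _ ≤ Cb + Cb * Cm + Cm * Cb := by
        gcongr
        exacts [hCb _, (norm_nonneg _).trans (hCb x), hCb x, hCm y,
          (norm_nonneg _).trans (hCm x), hCm x, hCb y]

theorem stmt_13_general {G : Type*} [Group G] (β : ℂ)
    (m : G → ℂ) (hm : ∀ x y, m (x * y) = m x * m y)
    (hmb : ∃ C : ℝ, ∀ x : G, ‖m x‖ ≤ C)
    (a a₁ : G → ℂ) (ha : ∀ x y, a (x * y) = a x + a y)
    (ha₁ : ∀ x y, a₁ (x * y) = a₁ x + a₁ y)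
    (b : G → ℂ) (hb : ∃ C : ℝ, ∀ x : G, ‖b x‖ ≤ C)
    (f g h : G → ℂ)
    (hf : ∀ x, f x = (1 / 2) * a x ^ 2 * m x + (1 / 2) * a₁ x * m x + b x)
    (hg : ∀ x, g x = -(1 / 4) * β ^ 2 * a x ^ 2 * m x + β * a x * m x
      - (1 / 4) * β ^ 2 * a₁ x * m x + m x - (1 / 2) * β ^ 2 * b x)
    (hh : ∀ x, h x = -(1 / 2) * β * a x ^ 2 * m x + a x * m x
      - (1 / 2) * β * a₁ x * m x - β * b x) :
    ∃ C : ℝ, ∀ x y : G,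
      ‖f (x * y) - f x * g y - g x * f y - h x * h y‖ ≤ C := by
  simpa only [sub_mul_sub_mul_sub_mul_eq_of_additive β hm ha ha₁ hf hg hh]
    using exists_norm_sub_mul_sub_mul_le hmb hb

theorem stmt_13 {G : Type*} [Group G] (β : ℂ)
    (m : G → ℂ) (hm : ∀ x y, m (x * y) = m x * m y) (hm0 : m ≠ 0)
    (hmb : ∃ C : ℝ, ∀ x : G, ‖m x‖ ≤ C)
    (a a₁ : G → ℂ) (ha : ∀ x y, a (x * y) = a x + a y)
    (ha₁ : ∀ x y, a₁ (x * y) = a₁ x + a₁ y) (ha0 : a ≠ 0)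
    (b : G → ℂ) (hb : ∃ C : ℝ, ∀ x : G, ‖b x‖ ≤ C)
    (f g h : G → ℂ)
    (hf : ∀ x, f x = (1 / 2) * a x ^ 2 * m x + (1 / 2) * a₁ x * m x + b x)
    (hg : ∀ x, g x = -(1 / 4) * β ^ 2 * a x ^ 2 * m x + β * a x * m x
      - (1 / 4) * β ^ 2 * a₁ x * m x + m x - (1 / 2) * β ^ 2 * b x)
    (hh : ∀ x, h x = -(1 / 2) * β * a x ^ 2 * m x + a x * m x
      - (1 / 2) * β * a₁ x * m x - β * b x) :
    ∃ C : ℝ, ∀ x y : G,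
      ‖f (x * y) - f x * g y - g x * f y - h x * h y‖ ≤ C :=
  stmt_13_general β m hm hmb a a₁ ha ha₁ b hb f g h hf hg hh
end

section
/- Let G be a group, m : G → ℂ a nonzero bounded multiplicative function, a : G → ℂ an additive function, b : G → ℂ a bounded function, and set H = a·m + b and define ψ(x,y) = f(xy) − f(x)m(y) − m(x)f(y) − H(x)H(y) for a function f : G → ℂ. If ψ is bounded on G × G, then the function (x,y) ↦ f(xy)m((xy)⁻¹) − (1/2)a(xy)² − (f(x)m(x⁻¹) − (1/2)a(x)²) − (f(y)m(y⁻¹) − (1/2)a(y)²) − a(x)b(y)m(y⁻¹) − a(y)b(x)m(x⁻¹) is bounded on G × G. -/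
/-!
Multiplying the defining identity of `ψ` by `m((xy)⁻¹) = m(x⁻¹) m(y⁻¹)` turns the expression into
`ψ(x,y) m((xy)⁻¹) + b(x) b(y) m(x⁻¹) m(y⁻¹)`: the term `a(x) a(y)` of `H(x) H(y) m((xy)⁻¹)` is the
cross term of `a(xy)² / 2`, and the mixed terms `a b m⁻¹` are subtracted explicitly. Both summands
are bounded because a bounded multiplicative function has `‖m‖ ≤ 1` (its powers stay bounded).
-/

section MultiplicativeFunction

variable {G : Type*} [Group G]

theorem map_ne_zero_of_map_mul_of_ne_zero {M₀ : Type*} [MonoidWithZero M₀] {m : G → M₀}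
    (hm : ∀ x y, m (x * y) = m x * m y) (hm0 : m ≠ 0) (x : G) : m x ≠ 0 := by
  intro hx
  refine hm0 (funext fun y => ?_)
  rw [Pi.zero_apply, ← inv_mul_cancel_right y x, hm, hx, mul_zero]

theorem map_mul_map_inv_of_map_mul_of_ne_zero {M₀ : Type*} [MonoidWithZero M₀]
    [IsLeftCancelMulZero M₀] {m : G → M₀} (hm : ∀ x y, m (x * y) = m x * m y) (hm0 : m ≠ 0) (x : G) :
    m x * m x⁻¹ = 1 := by
  have hm1 : m 1 = 1 := by
    refine mul_left_cancel₀ (map_ne_zero_of_map_mul_of_ne_zero hm hm0 1) ?_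
    rw [← hm, mul_one, mul_one]
  rw [← hm, mul_inv_cancel, hm1]

end MultiplicativeFunction

theorem norm_le_one_of_map_mul_of_bounded {M 𝕜 : Type*} [Monoid M] [SeminormedRing 𝕜]
    [NormMulClass 𝕜] {m : M → 𝕜} (hm : ∀ x y, m (x * y) = m x * m y)
    (hmb : ∃ C : ℝ, ∀ x, ‖m x‖ ≤ C) (x : M) : ‖m x‖ ≤ 1 := by
  obtain ⟨C, hC⟩ := hmb
  have hpow : ∀ n : ℕ, ‖m (x ^ (n + 1))‖ = ‖m x‖ ^ (n + 1) := by
    intro n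
    induction n with
    | zero => simp
    | succ n ih => rw [pow_succ x, hm, norm_mul, ih, ← pow_succ]
  by_contra! hx
  obtain ⟨n, hn⟩ := pow_unbounded_of_one_lt C hx
  have := (pow_le_pow_right₀ hx.le n.le_succ).trans ((hpow n).symm.le.trans (hC _))
  linarith

section TwistedQuadratic

variable {G : Type*} [Group G] {m a b H f : G → ℂ} {ψ : G → G → ℂ}

theorem twisted_quadratic_defect_eq (hm : ∀ x y, m (x * y) = m x * m y) (hm0 : m ≠ 0)
    (ha : ∀ x y, a (x * y) = a x + a y) (hH : ∀ x, H x = a x * m x + b x)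
    (hψ : ∀ x y, ψ x y = f (x * y) - f x * m y - m x * f y - H x * H y) (x y : G) :
    f (x * y) * m ((x * y)⁻¹) - (1 / 2) * a (x * y) ^ 2
        - (f x * m x⁻¹ - (1 / 2) * a x ^ 2)
        - (f y * m y⁻¹ - (1 / 2) * a y ^ 2)
        - a x * b y * m y⁻¹ - a y * b x * m x⁻¹
      = ψ x y * m ((x * y)⁻¹) + b x * b y * (m x⁻¹ * m y⁻¹) := by
  have hx := map_mul_map_inv_of_map_mul_of_ne_zero hm hm0 x
  have hy := map_mul_map_inv_of_map_mul_of_ne_zero hm hm0 y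
  rw [hψ, hH, hH, mul_inv_rev, hm, ha]
  linear_combination (f y * m y⁻¹ + a x * b y * m y⁻¹ + a x * a y * m y * m y⁻¹) * hx
    + (f x * m x⁻¹ + a y * b x * m x⁻¹ + a x * a y) * hy

end TwistedQuadratic

theorem stmt_16 {G : Type*} [Group G]
    (m : G → ℂ) (hm : ∀ x y, m (x * y) = m x * m y) (hm0 : m ≠ 0)
    (hmb : ∃ C : ℝ, ∀ x : G, norm (m x) ≤ C)
    (a : G → ℂ) (ha : ∀ x y, a (x * y) = a x + a y)
    (b : G → ℂ) (hb : ∃ C : ℝ, ∀ x : G, norm (b x) ≤ C)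
    (H : G → ℂ) (hH : ∀ x, H x = a x * m x + b x)
    (f : G → ℂ) (ψ : G → G → ℂ)
    (hψ : ∀ x y, ψ x y = f (x * y) - f x * m y - m x * f y - H x * H y)
    (hψb : ∃ C : ℝ, ∀ x y : G, norm (ψ x y) ≤ C) :
    ∃ C : ℝ, ∀ x y : G, norm
      (f (x * y) * m ((x * y)⁻¹) - (1 / 2) * a (x * y) ^ 2
        - (f x * m x⁻¹ - (1 / 2) * a x ^ 2)
        - (f y * m y⁻¹ - (1 / 2) * a y ^ 2)
        - a x * b y * m y⁻¹ - a y * b x * m x⁻¹) ≤ C := by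
  obtain ⟨Cψ, hCψ⟩ := hψb
  obtain ⟨Cb, hCb⟩ := hb
  have hm_le_one := norm_le_one_of_map_mul_of_bounded hm hmb
  refine ⟨Cψ * 1 + Cb * Cb * (1 * 1), fun x y => ?_⟩
  rw [twisted_quadratic_defect_eq hm hm0 ha hH hψ]
  exact (norm_add_le _ _).trans <| add_le_add (norm_mul_le_of_le (hCψ x y) (hm_le_one _)) <|
    norm_mul_le_of_le (norm_mul_le_of_le (hCb x) (hCb y)) (norm_mul_le_of_le (hm_le_one _) (hm_le_one _))
end

section
/- Let G be a group, m : G → ℂ a nonzero bounded multiplicative function, a : G → ℂ a nonzero additive function, and f : G → ℂ a function such that the function (x,y) ↦ f(xy) − f(x)m(y) − m(x)f(y) − a(x)a(y)m(x)m(y) is bounded on G × G. Then the function (x,y) ↦ (2f(xy)m((xy)⁻¹) − a(xy)²) − (2f(x)m(x⁻¹) − a(x)²) − (2f(y)m(y⁻¹) − a(y)²) is bounded on G × G. -/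
section MultiplicativeFunction

variable {G M₀ : Type*}

lemma map_one_eq_one_of_map_mul [MulOneClass G] [MonoidWithZero M₀] [IsLeftCancelMulZero M₀] {m : G → M₀}
    (hm : ∀ x y, m (x * y) = m x * m y) (hm0 : m ≠ 0) : m 1 = 1 := by
  obtain ⟨x, hx⟩ := Function.ne_iff.mp hm0
  refine mul_left_cancel₀ hx ?_
  rw [← hm, mul_one, mul_one]

lemma map_mul_map_inv_of_map_mul [Group G] [MonoidWithZero M₀] [IsLeftCancelMulZero M₀] {m : G → M₀}
    (hm : ∀ x y, m (x * y) = m x * m y) (hm0 : m ≠ 0) (x : G) : m x * m x⁻¹ = 1 := by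
  rw [← hm, mul_inv_cancel, map_one_eq_one_of_map_mul hm hm0]

end MultiplicativeFunction

/-- With `H = a • m` and `ψ(x, y) = f(xy) - f(x) m(y) - m(x) f(y) - H(x) H(y)`, this is the
defect of `2 f m⁻¹ - a²` from additivity; the `a²` terms absorb `2 a(x) a(y)`. -/
lemma defect_eq_two_mul_map_inv_mul {G K : Type*} [Group G] [Field K] {m a : G → K}
    (hm : ∀ x y, m (x * y) = m x * m y) (hm0 : m ≠ 0) (ha : ∀ x y, a (x * y) = a x + a y)
    (f : G → K) (x y : G) :
    (2 * f (x * y) * m (x * y)⁻¹ - a (x * y) ^ 2) - (2 * f x * m x⁻¹ - a x ^ 2)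
        - (2 * f y * m y⁻¹ - a y ^ 2)
      = 2 * m (x * y)⁻¹ * (f (x * y) - f x * m y - m x * f y - a x * a y * m x * m y) := by
  have hinv (z : G) : m z⁻¹ = (m z)⁻¹ :=
    eq_inv_of_mul_eq_one_right (map_mul_map_inv_of_map_mul hm hm0 z)
  have hne (z : G) : m z ≠ 0 := left_ne_zero_of_mul_eq_one (map_mul_map_inv_of_map_mul hm hm0 z)
  rw [hinv, hinv, hinv, hm, ha]
  field_simp [hne x, hne y]
  ring

theorem stmt_17_general {G : Type*} [Group G]
    (m : G → ℂ) (hm : ∀ x y, m (x * y) = m x * m y) (hm0 : m ≠ 0)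
    (hmb : ∃ C : ℝ, ∀ x : G, ‖m x‖ ≤ C)
    (a : G → ℂ) (ha : ∀ x y, a (x * y) = a x + a y)
    (f : G → ℂ)
    (hψb : ∃ C : ℝ, ∀ x y : G, ‖
      (f (x * y) - f x * m y - m x * f y - a x * a y * m x * m y)‖ ≤ C) :
    ∃ C : ℝ, ∀ x y : G, ‖
      ((2 * f (x * y) * m ((x * y)⁻¹) - a (x * y) ^ 2)
        - (2 * f x * m x⁻¹ - a x ^ 2)
        - (2 * f y * m y⁻¹ - a y ^ 2))‖ ≤ C := by
  obtain ⟨Cm, hCm⟩ := hmb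
  obtain ⟨Cψ, hCψ⟩ := hψb
  have hCm0 : 0 ≤ Cm := (norm_nonneg _).trans (hCm 1)
  refine ⟨2 * (Cm * Cψ), fun x y => ?_⟩
  rw [defect_eq_two_mul_map_inv_mul hm hm0 ha, mul_assoc, norm_mul, Complex.norm_two, norm_mul]
  gcongr
  · exact hCm _
  · exact hCψ x y

theorem stmt_17 {G : Type*} [Group G]
    (m : G → ℂ) (hm : ∀ x y, m (x * y) = m x * m y) (hm0 : m ≠ 0)
    (hmb : ∃ C : ℝ, ∀ x : G, ‖m x‖ ≤ C)
    (a : G → ℂ) (ha : ∀ x y, a (x * y) = a x + a y) (ha0 : a ≠ 0)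
    (f : G → ℂ)
    (hψb : ∃ C : ℝ, ∀ x y : G, ‖
      (f (x * y) - f x * m y - m x * f y - a x * a y * m x * m y)‖ ≤ C) :
    ∃ C : ℝ, ∀ x y : G, ‖
      ((2 * f (x * y) * m ((x * y)⁻¹) - a (x * y) ^ 2)
        - (2 * f x * m x⁻¹ - a x ^ 2)
        - (2 * f y * m y⁻¹ - a y ^ 2))‖ ≤ C :=
  stmt_17_general m hm hm0 hmb a ha f hψb
end

section
/- Let G be a semigroup and V a two-sided invariant linear subspace of complex-valued functions on G. Let f, g, h : G → ℂ be linearly independent modulo V, define ψ(x,y) = f(xy) − f(x)g(y) − g(x)f(y) − h(x)h(y), and suppose that for every y ∈ G both functions x ↦ ψ(x,y) and x ↦ f(xy) − f(yx) belong to V. Then ψ(x,y) = 0 for all x, y ∈ G, i.e., f(xy) = f(x)g(y) + g(x)f(y) + h(x)h(y) for all x, y ∈ G. -/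
/-!
Pick a linear functional `ℓ` vanishing on `V`, `f` and `h` with `ℓ g = 1`. Expanding the
translate `x ↦ f (x * (y * z)) = f ((x * y) * z)` modulo `V` in two ways and applying `ℓ`
gives `ψ y z = p y * f z + q y * h z` with `p y = ℓ (g (· * y)) - g y` and
`q y = ℓ (h (· * y)) - h y`. Near-symmetry of `ψ` puts `ψ y` itself in `V`, so independence
modulo `V` forces `p y = q y = 0`.
-/

open Module Submodule

theorem Submodule.exists_dual_le_ker_eq_one_of_notMem {K M : Type*} [Field K] [AddCommGroup M]
    [Module K M] {p : Submodule K M} {x : M} (hx : x ∉ p) :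
    ∃ ℓ : Dual K M, p ≤ LinearMap.ker ℓ ∧ ℓ x = 1 := by
  obtain ⟨ℓ, hℓx, hℓp⟩ := p.exists_dual_map_eq_bot_of_notMem hx inferInstance
  refine ⟨(ℓ x)⁻¹ • ℓ, fun v hv => ?_, by simp [hℓx]⟩
  have : ℓ v = 0 := LinearMap.le_ker_iff_map.2 hℓp hv
  simp [this]

theorem exists_dual_of_indep_mod {K M : Type*} [Field K] [AddCommGroup M] [Module K M]
    {V : Submodule K M} {f g h : M}
    (hindep : ∀ l₁ l₂ l₃ : K, l₁ • f + l₂ • g + l₃ • h ∈ V → l₁ = 0 ∧ l₂ = 0 ∧ l₃ = 0) :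
    ∃ ℓ : Dual K M, V ≤ LinearMap.ker ℓ ∧ ℓ f = 0 ∧ ℓ g = 1 ∧ ℓ h = 0 := by
  have hg : g ∉ V ⊔ span K {f, h} := by
    intro hg
    obtain ⟨v, hv, w, hw, rfl⟩ := mem_sup.1 hg
    obtain ⟨a, b, rfl⟩ := mem_span_pair.1 hw
    exact one_ne_zero (hindep (-a) 1 (-b) (by convert hv using 1; module)).2.1
  obtain ⟨ℓ, hker, hℓg⟩ := exists_dual_le_ker_eq_one_of_notMem hg
  have hspan : span K {f, h} ≤ LinearMap.ker ℓ := le_sup_right.trans hker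
  exact ⟨ℓ, le_sup_left.trans hker, hspan (subset_span (by simp)), hℓg,
    hspan (subset_span (by simp))⟩

section Translates

variable {K G : Type*} [CommRing K] [Semigroup G] {V : Submodule K (G → K)} {f g h : G → K}

/-- This is `ψ (·, y * z) - g z • ψ (·, y) - ψ (· * y, z)`, by associativity. -/
theorem translate_combination_mem (hV : ∀ φ ∈ V, ∀ y, (fun x => φ (x * y)) ∈ V)
    (hmem : ∀ y, (fun x => f (x * y) - f x * g y - g x * f y - h x * h y) ∈ V) (y z : G) :
    f z • (fun x => g (x * y)) + h z • (fun x => h (x * y)) -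
      ((g (y * z) - g y * g z) • f + (f (y * z) - f y * g z) • g +
        (h (y * z) - h y * g z) • h) ∈ V := by
  convert V.sub_mem (V.sub_mem (hmem (y * z)) (V.smul_mem (g z) (hmem y))) (hV _ (hmem z) y)
    using 1
  funext x
  simp only [Pi.add_apply, Pi.sub_apply, Pi.smul_apply, smul_eq_mul, mul_assoc]
  ring

theorem apply_mul_eq_of_dual (hV : ∀ φ ∈ V, ∀ y, (fun x => φ (x * y)) ∈ V)
    (hmem : ∀ y, (fun x => f (x * y) - f x * g y - g x * f y - h x * h y) ∈ V)
    {ℓ : Dual K (G → K)} (hker : V ≤ LinearMap.ker ℓ) (hf : ℓ f = 0) (hg : ℓ g = 1)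
    (hh : ℓ h = 0) (y z : G) :
    f (y * z) = f y * g z + ℓ (fun x => g (x * y)) * f z + ℓ (fun x => h (x * y)) * h z := by
  have := hker (translate_combination_mem hV hmem y z)
  simp only [LinearMap.mem_ker, map_add, map_sub, map_smul, hf, hg, hh, smul_eq_mul] at this
  linear_combination -this

theorem defect_apply_left_mem
    (hmem : ∀ y, (fun x => f (x * y) - f x * g y - g x * f y - h x * h y) ∈ V)
    (hcomm : ∀ y, (fun x => f (x * y) - f (y * x)) ∈ V) (y : G) :
    (fun z => f (y * z) - f y * g z - g y * f z - h y * h z) ∈ V := by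
  convert V.sub_mem (hmem y) (hcomm y) using 1
  funext z
  simp only [Pi.sub_apply]
  ring

end Translates

theorem stmt_18 {G : Type*} [Semigroup G] (V : Submodule ℂ (G → ℂ))
    (hV : ∀ φ ∈ V, ∀ y : G, (fun x => φ (x * y)) ∈ V ∧ (fun x => φ (y * x)) ∈ V)
    (f g h : G → ℂ)
    (hindep : ∀ l₁ l₂ l₃ : ℂ, (l₁ • f + l₂ • g + l₃ • h) ∈ V → l₁ = 0 ∧ l₂ = 0 ∧ l₃ = 0)
    (ψ : G → G → ℂ)
    (hψ : ∀ x y, ψ x y = f (x * y) - f x * g y - g x * f y - h x * h y)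
    (hmem : ∀ y : G, (fun x => ψ x y) ∈ V)
    (hcomm : ∀ y : G, (fun x => f (x * y) - f (y * x)) ∈ V) :
    ∀ x y : G, f (x * y) = f x * g y + g x * f y + h x * h y := by
  obtain rfl : ψ = fun x y => f (x * y) - f x * g y - g x * f y - h x * h y := by
    funext x y; exact hψ x y
  intro y z
  obtain ⟨ℓ, hker, hf, hg, hh⟩ := exists_dual_of_indep_mod hindep
  have hrep := apply_mul_eq_of_dual (fun φ hφ y => (hV φ hφ y).1) hmem hker hf hg hh y
  set p := ℓ (fun x => g (x * y)) - g y
  set q := ℓ (fun x => h (x * y)) - h y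
  have hpq : p • f + (0 : ℂ) • g + q • h ∈ V := by
    convert defect_apply_left_mem hmem hcomm y using 1
    funext w
    simp only [Pi.add_apply, Pi.smul_apply, smul_eq_mul, hrep w, p, q]
    ring
  obtain ⟨hp, -, hq⟩ := hindep p 0 q hpq
  linear_combination hrep z + f z * hp + h z * hq
end
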